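/- Let $(Z,\omega)$ be a deformation datum over a smooth projective curve $X$ of genus $g_X$ over an algebraically closed field $k$ of characteristic $p$, with critical points $(\tau_j)_{j\in J}$ and invariants $\sigma_j = h_j/m_j$. Then $\sum_{j\in J} (\sigma_j - 1) = 2g_X - 2$. -/

import Mathlib

/-!
Multiplying by `|H| = m_j n_j` turns `σ_j - 1` into `n_j (h_j - 1) - n_j (m_j - 1)`: the
contribution of the fibre over `τ_j` to `deg(div ω)` minus its contribution to the ramification
divisor of `Z → X`. Summing over `j`, the first terms give `2 g_Z - 2` and, by Riemann–Hurwitz,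
the second ones give `2 g_Z - 2 - |H| (2 g_X - 2)`, so `|H| ∑ (σ_j - 1) = |H| (2 g_X - 2)`.
-/

theorem mul_div_sub_one_of_eq_mul {K : Type*} [Field K] {H a m n : K} (hH : H ≠ 0)
    (hHmn : H = m * n) : H * (a / m - 1) = n * (a - 1) - n * (m - 1) := by
  subst hHmn
  have hm : m ≠ 0 := left_ne_zero_of_mul hH
  field_simp
  ring

theorem mul_sum_div_sub_one_of_eq_mul {ι K : Type*} [Field K] (s : Finset ι) {H : K}
    {a m n : ι → K} (hH : H ≠ 0) (hHmn : ∀ j ∈ s, H = m j * n j) :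
    H * ∑ j ∈ s, (a j / m j - 1) = ∑ j ∈ s, n j * (a j - 1) - ∑ j ∈ s, n j * (m j - 1) := by
  rw [Finset.mul_sum, ← Finset.sum_sub_distrib]
  exact Finset.sum_congr rfl fun j hj => mul_div_sub_one_of_eq_mul hH (hHmn j hj)

theorem deformation_datum_local_vanishing_cycle_formula_general
    (J : Type*) [Fintype J] (m n : J → ℕ) (h : J → ℤ)
    (H : ℕ) (gX gZ : ℤ)
    (hH : 0 < H)
    -- orbit-stabilizer for the fiber over each critical point
    (horbit : ∀ j, H = m j * n j)
    -- the divisor of the differential ω has degree 2 g_Z - 2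
    (hdeg : ∑ j, (n j : ℤ) * (h j - 1) = 2 * gZ - 2)
    -- Riemann–Hurwitz for the tame Galois cover Z → X of degree H
    (hRH : 2 * gZ - 2 = (H : ℤ) * (2 * gX - 2) + ∑ j, (n j : ℤ) * ((m j : ℤ) - 1)) :
    ∑ j, ((h j : ℚ) / (m j : ℚ) - 1) = 2 * (gX : ℚ) - 2 := by
  have hHQ : (H : ℚ) ≠ 0 := Nat.cast_ne_zero.mpr hH.ne'
  have hdegQ : ∑ j, (n j : ℚ) * (h j - 1) = 2 * gZ - 2 := by exact_mod_cast hdeg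
  have hRHQ : (2 * gZ - 2 : ℚ) = H * (2 * gX - 2) + ∑ j, (n j : ℚ) * (m j - 1) := by
    exact_mod_cast hRH
  have horbitQ : ∀ j ∈ Finset.univ, (H : ℚ) = m j * n j := fun j _ => by exact_mod_cast horbit j
  apply mul_left_cancel₀ hHQ
  rw [mul_sum_div_sub_one_of_eq_mul Finset.univ hHQ horbitQ, hdegQ, hRHQ]
  ring

theorem deformation_datum_local_vanishing_cycle_formula
    (J : Type*) [Fintype J] (m n : J → ℕ) (h : J → ℤ)
    (H : ℕ) (gX gZ : ℤ)
    (hH : 0 < H)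
    (hm : ∀ j, 0 < m j) (hn : ∀ j, 0 < n j)
    -- orbit-stabilizer for the fiber over each critical point
    (horbit : ∀ j, H = m j * n j)
    -- the divisor of the differential ω has degree 2 g_Z - 2
    (hdeg : ∑ j, (n j : ℤ) * (h j - 1) = 2 * gZ - 2)
    -- Riemann–Hurwitz for the tame Galois cover Z → X of degree H
    (hRH : 2 * gZ - 2 = (H : ℤ) * (2 * gX - 2) + ∑ j, (n j : ℤ) * ((m j : ℤ) - 1)) :
    ∑ j, ((h j : ℚ) / (m j : ℚ) - 1) = 2 * (gX : ℚ) - 2 :=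
  deformation_datum_local_vanishing_cycle_formula_general J m n h H gX gZ hH horbit hdeg hRH
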